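/- arXiv:1907.03486 — 5 statements merged into one kernel-verified Lean document; each statement's English description precedes it below -/
import Mathlib

section
/- Let f : [a,∞) → ℝ, t₀ ∈ (a,∞), and α ∈ (0,1]. If the conformable derivative T^α_a f(t₀) = lim_{θ→0} (f(t₀ + θ(t₀-a)^{1-α}) - f(t₀))/θ exists, then for every β ∈ (0,1] the conformable derivative T^β_a f(t₀) exists and T^α_a f(t₀) = (t₀-a)^{β-α} · T^β_a f(t₀). -/
open Filter Set Real

/-- `f` has (two-sided) left-sided conformable derivative of order `α`
with lower terminal `a` at the point `t`, with value `L`. -/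
def HasConfDerivAt (a α : ℝ) (f : ℝ → ℝ) (t L : ℝ) : Prop :=
  Filter.Tendsto (fun θ : ℝ => (f (t + θ * (t - a) ^ (1 - α)) - f t) / θ)
    (nhdsWithin 0 {0}ᶜ) (nhds L)

theorem stmt0 (a α : ℝ) (f : ℝ → ℝ) (t₀ L : ℝ)
    (ht₀ : a < t₀) (hα : 0 < α) (hα1 : α ≤ 1)
    (h : HasConfDerivAt a α f t₀ L) :
    ∀ β : ℝ, 0 < β → β ≤ 1 →
      ∃ M : ℝ, HasConfDerivAt a β f t₀ M ∧ L = (t₀ - a) ^ (β - α) * M := by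
  intro β hβ hβ1
  have hpos : (0:ℝ) < t₀ - a := by linarith
  set r := (t₀ - a) ^ (α - β) with hr
  have hrpos : 0 < r := Real.rpow_pos_of_pos hpos _
  have hr0 : r ≠ 0 := hrpos.ne'
  refine ⟨r * L, ?_, ?_⟩
  · have hmap : Tendsto (fun θ : ℝ => θ * r) (nhdsWithin 0 {0}ᶜ) (nhdsWithin 0 {0}ᶜ) := by
      refine Tendsto.inf ?_ ?_
      · have : Tendsto (fun θ : ℝ => θ * r) (nhds 0) (nhds (0 * r)) :=
          tendsto_id.mul_const r
        simpa using this
      · refine tendsto_principal_principal.mpr ?_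
        intro x hx
        simp only [mem_compl_iff, mem_singleton_iff] at hx ⊢
        exact fun h0 => hx (by
          rcases mul_eq_zero.mp h0 with h1 | h1
          · exact h1
          · exact absurd h1 hr0)
    have h2 := h.comp hmap
    have h3 : Tendsto
        (fun θ : ℝ => ((f (t₀ + θ * r * (t₀ - a) ^ (1 - α)) - f t₀) / (θ * r)) * r)
        (nhdsWithin 0 {0}ᶜ) (nhds (L * r)) := h2.mul_const r
    have hc : r * (t₀ - a) ^ (1 - α) = (t₀ - a) ^ (1 - β) := by
      rw [hr, ← Real.rpow_add hpos]; ring_nf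
    have heq : ∀ᶠ θ : ℝ in nhdsWithin 0 {0}ᶜ,
        ((f (t₀ + θ * r * (t₀ - a) ^ (1 - α)) - f t₀) / (θ * r)) * r
          = (f (t₀ + θ * (t₀ - a) ^ (1 - β)) - f t₀) / θ := by
      filter_upwards [self_mem_nhdsWithin] with θ hθ
      simp only [mem_compl_iff, mem_singleton_iff] at hθ
      rw [mul_assoc θ r, hc]
      field_simp
    have := h3.congr' heq
    simpa [HasConfDerivAt, mul_comm] using this
  · have : (t₀ - a) ^ (β - α) * r = 1 := by
      rw [hr, ← Real.rpow_add hpos]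
      simp
    calc L = ((t₀ - a) ^ (β - α) * r) * L := by rw [this, one_mul]
    _ = (t₀ - a) ^ (β - α) * (r * L) := by ring
end

section
/- Let f : [a,∞) → ℝ be locally Lebesgue integrable and locally bounded, and let α ∈ (0,1). Then for every t ∈ (a,∞) at which f is continuous, the conformable derivative of the conformable integral satisfies T^α_a(I^α_a f)(t) = f(t). -/
open Filter Set Real

theorem stmt10 (a α : ℝ) (hα : 0 < α) (hα1 : α < 1)
    (f : ℝ → ℝ)
    (hint : MeasureTheory.LocallyIntegrableOn f (Set.Ici a) MeasureTheory.volume)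
    (hbdd : ∀ t ∈ Set.Ici a, ∃ C : ℝ, ∀ᶠ s in nhdsWithin t (Set.Ici a), |f s| ≤ C) :
    ∀ t : ℝ, a < t → ContinuousAt f t →
      HasConfDerivAt a α (fun u => ∫ s in a..u, (s - a) ^ (α - 1) * f s) t (f t) := by
  intro t hat hcont
  set g : ℝ → ℝ := fun s => (s - a) ^ (α - 1) * f s with hgdef
  have hfmeas : MeasureTheory.AEStronglyMeasurable f
      (MeasureTheory.volume.restrict (Set.Ici a)) := hint.aestronglyMeasurable
  have hrmeas : Measurable (fun s : ℝ => (s - a) ^ (α - 1)) := by fun_prop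
  -- measurability of g on subsets of Ici a
  have hgmeas : ∀ S : Set ℝ, S ⊆ Set.Ici a →
      MeasureTheory.AEStronglyMeasurable g (MeasureTheory.volume.restrict S) := by
    intro S hS
    exact hrmeas.aestronglyMeasurable.mul
      (hfmeas.mono_measure (MeasureTheory.Measure.restrict_mono hS le_rfl))
  -- integrability of g on Ioc a u for each u > a
  have hIntOn : ∀ u : ℝ, a < u → MeasureTheory.IntegrableOn g (Set.Ioc a u) := by
    intro u hu
    obtain ⟨C, hC⟩ := hbdd a (Set.mem_Ici.mpr le_rfl)
    obtain ⟨ε, hε, hεC⟩ := Metric.mem_nhdsWithin_iff.mp hC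
    set b : ℝ := min (a + ε / 2) u with hbdefn
    have hab : a < b := lt_min (by linarith) hu
    have hbu : b ≤ u := min_le_right _ _
    have h1 : MeasureTheory.IntegrableOn g (Set.Ioc a b) := by
      -- dominated by C * (s - a) ^ (α - 1)
      have hdom : MeasureTheory.IntegrableOn
          (fun s : ℝ => C * (s - a) ^ (α - 1)) (Set.Ioc a b) := by
        have : IntervalIntegrable (fun s : ℝ => (s - a) ^ (α - 1))
            MeasureTheory.volume a b := by
          have := (intervalIntegral.intervalIntegrable_rpow'
            (a := 0) (b := b - a) (r := α - 1) (by linarith)).comp_sub_right a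
          simpa using this
        have h2 := (intervalIntegrable_iff_integrableOn_Ioc_of_le hab.le).mp this
        exact h2.const_mul C
      refine hdom.integrable.mono' (hgmeas _ (fun x hx => le_of_lt hx.1)) ?_
      filter_upwards [MeasureTheory.ae_restrict_mem measurableSet_Ioc] with s hs
      have hsa : 0 < s - a := by simp at hs; linarith [hs.1]
      have hfb : |f s| ≤ C := by
        refine hεC ⟨?_, ?_⟩
        · rw [Metric.mem_ball, Real.dist_eq]
          have hsb : s ≤ a + ε / 2 := le_trans hs.2 (min_le_left _ _)
          rw [abs_of_pos hsa]; linarith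
        · exact Set.mem_Ici.mpr (le_of_lt (by linarith))
      have hr : (0:ℝ) < (s - a) ^ (α - 1) := Real.rpow_pos_of_pos hsa _
      calc ‖g s‖ = (s - a) ^ (α - 1) * |f s| := by
            rw [hgdef]; simp [abs_mul, abs_of_pos hr, Real.norm_eq_abs]
        _ ≤ (s - a) ^ (α - 1) * C := by
            exact mul_le_mul_of_nonneg_left hfb hr.le
        _ = C * (s - a) ^ (α - 1) := mul_comm _ _
    have h2 : MeasureTheory.IntegrableOn g (Set.Ioc b u) := by
      rcases le_or_gt u b with h | h
      · rw [Set.Ioc_eq_empty (by linarith)]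
        simp [MeasureTheory.integrableOn_empty]
      · have hK : IsCompact (Set.Icc b u) := isCompact_Icc
        have hfK : MeasureTheory.IntegrableOn f (Set.Icc b u) :=
          hint.integrableOn_compact_subset (fun x hx => le_of_lt (lt_of_lt_of_le hab hx.1)) hK
        have hcontK : ContinuousOn (fun s : ℝ => (s - a) ^ (α - 1)) (Set.Icc b u) :=
          fun x hx => ((continuousAt_id.sub continuousAt_const).rpow_const
            (Or.inl (by have := hx.1; intro hc; simp at hc; linarith))).continuousWithinAt
        exact (MeasureTheory.IntegrableOn.continuousOn_mul hcontK hfK hK).mono_set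
          Set.Ioc_subset_Icc_self
    have : MeasureTheory.IntegrableOn g (Set.Ioc a b ∪ Set.Ioc b u) := h1.union h2
    exact this.mono_set (by rw [Set.Ioc_union_Ioc_eq_Ioc hab.le hbu])
  -- FTC: F has derivative (t - a)^(α-1) * f t at t
  have hInt : IntervalIntegrable g MeasureTheory.volume a t :=
    (intervalIntegrable_iff_integrableOn_Ioc_of_le hat.le).mpr (hIntOn t hat)
  have hMeas : StronglyMeasurableAtFilter g (nhds t) MeasureTheory.volume := by
    refine ⟨Set.Ioo a (t + 1), Ioo_mem_nhds hat (by linarith), ?_⟩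
    exact hgmeas _ (fun x hx => le_of_lt hx.1)
  have hCont : ContinuousAt g t := by
    exact (((continuousAt_id.sub continuousAt_const).rpow_const
      (Or.inl (by intro h; simp at h; linarith)))).mul hcont
  have hF : HasDerivAt (fun u => ∫ s in a..u, g s) ((t - a) ^ (α - 1) * f t) t :=
    intervalIntegral.integral_hasDerivAt_right hInt hMeas hCont
  -- conformable derivative
  set c : ℝ := (t - a) ^ (1 - α) with hcdef
  have hta : (0:ℝ) < t - a := by linarith
  have hc : 0 < c := Real.rpow_pos_of_pos hta _
  have hmap : Tendsto (fun θ : ℝ => t + θ * c) (nhdsWithin 0 {0}ᶜ) (nhdsWithin t {t}ᶜ) := by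
    apply tendsto_nhdsWithin_of_tendsto_nhds_of_eventually_within
    · have : Tendsto (fun θ : ℝ => t + θ * c) (nhds 0) (nhds (t + 0 * c)) :=
        (tendsto_id.mul_const c).const_add t
      simpa using this.mono_left nhdsWithin_le_nhds
    · filter_upwards [self_mem_nhdsWithin] with θ hθ
      simp only [Set.mem_compl_iff, Set.mem_singleton_iff] at hθ ⊢
      intro h
      apply hθ
      have : θ * c = 0 := by linarith
      exact (mul_eq_zero.mp this).resolve_right hc.ne'
  have key := (hasDerivAt_iff_tendsto_slope.mp hF).comp hmap
  have key2 : Tendsto (fun θ : ℝ =>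
      c * slope (fun u => ∫ s in a..u, g s) t (t + θ * c))
      (nhdsWithin 0 {0}ᶜ) (nhds (c * ((t - a) ^ (α - 1) * f t))) :=
    key.const_mul c
  have hval : c * ((t - a) ^ (α - 1) * f t) = f t := by
    rw [hcdef, ← mul_assoc, ← Real.rpow_add hta]
    norm_num
  rw [hval] at key2
  refine key2.congr' ?_
  filter_upwards [self_mem_nhdsWithin] with θ hθ
  simp only [Set.mem_compl_iff, Set.mem_singleton_iff] at hθ
  rw [slope_def_field]
  rw [← hcdef]
  field_simp
  ring
end

section
/- Let f : [a,∞) → ℝ and α ∈ (0,1]. Suppose f has a conformable derivative of order α on some interval (a, a+ε) with ε > 0, and the limit T^α_a f(a) := lim_{t→a+} T^α_a f(t) exists. Then for every β ∈ (0,α), f has a conformable derivative of order β on (a, a+ε) and T^β_a f(a) := lim_{t→a+} T^β_a f(t) exists and equals 0. -/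
/-!
Substituting `θ ↦ (t - a) ^ (α - β) * θ` in the difference quotient shows that, for `t > a`,
`T^β_a f(t) = (t - a) ^ (α - β) * T^α_a f(t)`. The factor tends to `0` as `t → a⁺` when `β < α`,
while `T^α_a f(t)` stays bounded, since it converges.
-/

open Filter Set Real

open scoped Topology

lemma tendsto_const_mul_nhdsNE_zero {c : ℝ} (hc : c ≠ 0) :
    Tendsto (fun θ : ℝ => c * θ) (𝓝[≠] 0) (𝓝[≠] 0) :=
  tendsto_nhdsWithin_of_tendsto_nhds_of_eventually_within _
    (((continuous_const_mul c).tendsto' 0 0 (mul_zero c)).mono_left nhdsWithin_le_nhds)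
    (eventually_nhdsWithin_of_forall fun _ hθ => mul_ne_zero hc hθ)

lemma HasConfDerivAt.change_order {a α : ℝ} {f : ℝ → ℝ} {t L : ℝ} (ht : a < t)
    (h : HasConfDerivAt a α f t L) (β : ℝ) :
    HasConfDerivAt a β f t ((t - a) ^ (α - β) * L) := by
  have hta : 0 < t - a := sub_pos.2 ht
  set c := (t - a) ^ (α - β)
  have hc : 0 < c := rpow_pos_of_pos hta _
  have hstep : (t - a) ^ (1 - β) = c * (t - a) ^ (1 - α) := by
    rw [← rpow_add hta]; ring_nf
  refine ((h.comp (tendsto_const_mul_nhdsNE_zero hc.ne')).const_mul c).congr fun θ => ?_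
  rw [Function.comp_apply, hstep, mul_div_assoc', mul_div_mul_left _ _ hc.ne']
  ring_nf

lemma tendsto_sub_rpow_nhdsGT {a p : ℝ} (hp : 0 < p) :
    Tendsto (fun t : ℝ => (t - a) ^ p) (𝓝[>] a) (𝓝 0) :=
  (((continuous_rpow_const hp.le).comp (continuous_sub_right a)).tendsto' a 0
    (by simp [zero_rpow hp.ne'])).mono_left nhdsWithin_le_nhds

theorem stmt11_general (a α : ℝ)
    (f D : ℝ → ℝ) (ε : ℝ)
    (hD : ∀ t ∈ Set.Ioo a (a + ε), HasConfDerivAt a α f t (D t))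
    (L : ℝ) (hL : Filter.Tendsto D (nhdsWithin a (Set.Ioi a)) (nhds L)) :
    ∀ β : ℝ, 0 < β → β < α →
      ∃ E : ℝ → ℝ, (∀ t ∈ Set.Ioo a (a + ε), HasConfDerivAt a β f t (E t)) ∧
        Filter.Tendsto E (nhdsWithin a (Set.Ioi a)) (nhds 0) := by
  intro β _ hβα
  refine ⟨fun t => (t - a) ^ (α - β) * D t, fun t ht => (hD t ht).change_order ht.1 β, ?_⟩
  simpa using (tendsto_sub_rpow_nhdsGT (sub_pos.2 hβα)).mul hL

theorem stmt11 (a α : ℝ) (hα : 0 < α) (hα1 : α ≤ 1)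
    (f D : ℝ → ℝ) (ε : ℝ) (hε : 0 < ε)
    (hD : ∀ t ∈ Set.Ioo a (a + ε), HasConfDerivAt a α f t (D t))
    (L : ℝ) (hL : Filter.Tendsto D (nhdsWithin a (Set.Ioi a)) (nhds L)) :
    ∀ β : ℝ, 0 < β → β < α →
      ∃ E : ℝ → ℝ, (∀ t ∈ Set.Ioo a (a + ε), HasConfDerivAt a β f t (E t)) ∧
        Filter.Tendsto E (nhdsWithin a (Set.Ioi a)) (nhds 0) :=
  stmt11_general a α f D ε hD L hL
end

section
/- For all α, β ∈ (0,1] and a ∈ ℝ, the class of functions possessing a conformable derivative of order α at every point of (a,∞) coincides with the class of functions possessing a conformable derivative of order β at every point of (a,∞); both coincide with the class of functions differentiable on (a,∞). -/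
/-!
Since `(t - a) ^ (1 - γ) > 0` for `t > a`, the conformable difference quotient at `t` is the
ordinary one along the increment `θ * (t - a) ^ (1 - γ)`, and rescaling the increment by a nonzero
constant is a homeomorphism of the punctured neighbourhood `𝓝[≠] 0`. So a conformable derivative
of any order exists at `t` exactly when `f` is differentiable at `t`.
-/

open Filter Set Real

open Topology

theorem map_mul_const_nhdsNE_zero {𝕜 : Type*} [DivisionRing 𝕜] [TopologicalSpace 𝕜]
    [IsTopologicalDivisionRing 𝕜] {c : 𝕜} (hc : c ≠ 0) :
    map (· * c) (𝓝[≠] 0) = 𝓝[≠] 0 := by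
  let e := Homeomorph.mulRight₀ c hc
  have himage : e '' {0}ᶜ = {0}ᶜ := by
    rw [image_compl_eq e.bijective, image_singleton]
    simp [e]
  have := e.isEmbedding.map_nhdsWithin_eq {0}ᶜ 0
  rwa [himage, show e 0 = 0 from zero_mul c] at this

section

variable {𝕜 F : Type*} [NontriviallyNormedField 𝕜] [NormedAddCommGroup F] [NormedSpace 𝕜 F]
  {f : 𝕜 → F} {t c : 𝕜}

theorem hasDerivAt_iff_tendsto_slope_mul_const {f' : F} (hc : c ≠ 0) :
    HasDerivAt f f' t ↔
      Tendsto (fun θ => θ⁻¹ • (f (t + θ * c) - f t)) (𝓝[≠] 0) (𝓝 (c • f')) := by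
  have hslope : (fun θ => c⁻¹ • θ⁻¹ • (f (t + θ * c) - f t)) =
      (fun s => s⁻¹ • (f (t + s) - f t)) ∘ (· * c) := by
    ext θ
    simp only [Function.comp_apply, smul_smul, mul_inv, mul_comm]
  rw [← tendsto_const_smul_iff₀ (inv_ne_zero hc), inv_smul_smul₀ hc, hslope, ← tendsto_map'_iff,
    map_mul_const_nhdsNE_zero hc, hasDerivAt_iff_tendsto_slope_zero]

theorem differentiableAt_iff_exists_tendsto_slope_mul_const (hc : c ≠ 0) :
    DifferentiableAt 𝕜 f t ↔
      ∃ L, Tendsto (fun θ => θ⁻¹ • (f (t + θ * c) - f t)) (𝓝[≠] 0) (𝓝 L) := by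
  refine ⟨fun hf => ⟨_, (hasDerivAt_iff_tendsto_slope_mul_const hc).1 hf.hasDerivAt⟩, ?_⟩
  rintro ⟨L, hL⟩
  rw [← smul_inv_smul₀ hc L, ← hasDerivAt_iff_tendsto_slope_mul_const hc] at hL
  exact hL.differentiableAt

end

theorem exists_hasConfDerivAt_iff_differentiableAt {a α t : ℝ} {f : ℝ → ℝ} (ht : a < t) :
    (∃ L, HasConfDerivAt a α f t L) ↔ DifferentiableAt ℝ f t := by
  have hc : (t - a) ^ (1 - α) ≠ 0 := (rpow_pos_of_pos (sub_pos.2 ht) _).ne'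
  simp only [differentiableAt_iff_exists_tendsto_slope_mul_const hc, HasConfDerivAt,
    div_eq_inv_mul, smul_eq_mul]

theorem setOf_forall_exists_hasConfDerivAt (a α : ℝ) :
    {f : ℝ → ℝ | ∀ t : ℝ, a < t → ∃ L : ℝ, HasConfDerivAt a α f t L} =
      {f : ℝ → ℝ | ∀ t : ℝ, a < t → DifferentiableAt ℝ f t} := by
  ext f
  exact forall₂_congr fun _ => exists_hasConfDerivAt_iff_differentiableAt

theorem stmt14_general (a α β : ℝ) :
    {f : ℝ → ℝ | ∀ t : ℝ, a < t → ∃ L : ℝ, HasConfDerivAt a α f t L} =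
      {f : ℝ → ℝ | ∀ t : ℝ, a < t → ∃ L : ℝ, HasConfDerivAt a β f t L} ∧
    {f : ℝ → ℝ | ∀ t : ℝ, a < t → ∃ L : ℝ, HasConfDerivAt a α f t L} =
      {f : ℝ → ℝ | ∀ t : ℝ, a < t → DifferentiableAt ℝ f t} :=
  ⟨(setOf_forall_exists_hasConfDerivAt a α).trans (setOf_forall_exists_hasConfDerivAt a β).symm,
    setOf_forall_exists_hasConfDerivAt a α⟩

theorem stmt14 (a α β : ℝ) (hα : 0 < α) (hα1 : α ≤ 1) (hβ : 0 < β) (hβ1 : β ≤ 1) :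
    {f : ℝ → ℝ | ∀ t : ℝ, a < t → ∃ L : ℝ, HasConfDerivAt a α f t L} =
      {f : ℝ → ℝ | ∀ t : ℝ, a < t → ∃ L : ℝ, HasConfDerivAt a β f t L} ∧
    {f : ℝ → ℝ | ∀ t : ℝ, a < t → ∃ L : ℝ, HasConfDerivAt a α f t L} =
      {f : ℝ → ℝ | ∀ t : ℝ, a < t → DifferentiableAt ℝ f t} :=
  stmt14_general a α β
end

section
/- Let α ∈ (0,1), β ∈ (α,1), a ∈ ℝ, and f(t) = α^{-1}(t-a)^{α-β}. Then f has a conformable derivative of order α at every t ∈ (a,∞), but the conformable integral I^α_a(T^α_a f)(t) = ∫_a^t (s-a)^{α-1} T^α_a f(s) ds diverges for every t ∈ (a,∞). -/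
open Filter Set Real

lemma aux_hasDerivAt (a α β : ℝ) (hα : 0 < α) {s : ℝ} (hs : a < s) :
    HasDerivAt (fun u : ℝ => α⁻¹ * (u - a) ^ (α - β))
      (α⁻¹ * ((α - β) * (s - a) ^ (α - β - 1))) s := by
  have h1 : HasDerivAt (fun u : ℝ => u - a) 1 s := (hasDerivAt_id s).sub_const a
  have h2 : HasDerivAt (fun u : ℝ => (u - a) ^ (α - β))
      ((α - β) * (s - a) ^ (α - β - 1)) s := by
    have := (Real.hasDerivAt_rpow_const (x := s - a) (p := α - β)
      (Or.inl (ne_of_gt (sub_pos.2 hs)))).comp s h1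
    rw [mul_one] at this; exact this
  simpa using h2.const_mul α⁻¹

theorem stmt15 (a α β : ℝ) (hα : 0 < α) (hα1 : α < 1) (hβ : α < β) (hβ1 : β < 1) :
    (∀ t : ℝ, a < t →
      HasConfDerivAt a α (fun s => α⁻¹ * (s - a) ^ (α - β)) t
        ((t - a) ^ (1 - α) * deriv (fun s => α⁻¹ * (s - a) ^ (α - β)) t)) ∧
    (∀ t : ℝ, a < t →
      ¬ IntervalIntegrable
          (fun s => (s - a) ^ (α - 1) *
            ((s - a) ^ (1 - α) * deriv (fun u => α⁻¹ * (u - a) ^ (α - β)) s))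
          MeasureTheory.volume a t) := by
  constructor
  · intro t ht
    set F : ℝ → ℝ := fun s => α⁻¹ * (s - a) ^ (α - β) with hF
    set c : ℝ := (t - a) ^ (1 - α) with hc
    have hFd : HasDerivAt F (α⁻¹ * ((α - β) * (t - a) ^ (α - β - 1))) t :=
      aux_hasDerivAt a α β hα ht
    have hderiv : deriv F t = α⁻¹ * ((α - β) * (t - a) ^ (α - β - 1)) := hFd.deriv
    have hg : HasDerivAt (fun θ : ℝ => t + θ * c) c 0 := by
      simpa using ((hasDerivAt_id (0 : ℝ)).mul_const c).const_add t
    have hFd' : HasDerivAt F (α⁻¹ * ((α - β) * (t - a) ^ (α - β - 1)))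
        ((fun θ : ℝ => t + θ * c) 0) := by
      rw [show ((fun θ : ℝ => t + θ * c) 0) = t from by norm_num]; exact hFd
    have hcomp : HasDerivAt (fun θ : ℝ => F (t + θ * c))
        ((α⁻¹ * ((α - β) * (t - a) ^ (α - β - 1))) * c) 0 :=
      HasDerivAt.comp (h₂ := F) (h := fun θ : ℝ => t + θ * c) 0 hFd' hg
    have htend := hasDerivAt_iff_tendsto_slope.mp hcomp
    unfold HasConfDerivAt
    rw [hderiv]
    rw [mul_comm]
    refine htend.congr' ?_
    filter_upwards [self_mem_nhdsWithin] with θ hθ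
    simp [slope, F, c, div_eq_inv_mul]
  · intro t ht h
    set C : ℝ := α⁻¹ * (α - β) with hC
    have hC0 : C ≠ 0 := by
      apply mul_ne_zero (inv_ne_zero (ne_of_gt hα))
      intro hz
      have : α = β := by linarith [sub_eq_zero.mp hz]
      linarith
    have h2 := h.comp_add_right a
    rw [sub_self] at h2
    rw [intervalIntegrable_iff_integrableOn_Ioo_of_le (by linarith : (0:ℝ) ≤ t - a)] at h2
    have h3 := h2.const_mul C⁻¹
    have h4 : MeasureTheory.IntegrableOn (fun x : ℝ => x ^ (α - β - 1))
        (Ioo (0 : ℝ) (t - a)) MeasureTheory.volume := by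
      have h3' : MeasureTheory.IntegrableOn
          (fun x : ℝ => C⁻¹ * ((x + a - a) ^ (α - 1) * ((x + a - a) ^ (1 - α) *
            deriv (fun u => α⁻¹ * (u - a) ^ (α - β)) (x + a))))
          (Ioo (0 : ℝ) (t - a)) MeasureTheory.volume := h3
      refine h3'.congr_fun ?_ measurableSet_Ioo
      intro x hx
      have hx0 : (0 : ℝ) < x := hx.1
      have hxa : a < x + a := by linarith
      have hd : deriv (fun u : ℝ => α⁻¹ * (u - a) ^ (α - β)) (x + a)
          = α⁻¹ * ((α - β) * x ^ (α - β - 1)) := by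
        have := (aux_hasDerivAt a α β hα hxa).deriv
        simpa using this
      have hone : x ^ (α - 1) * x ^ (1 - α) = 1 := by
        rw [← Real.rpow_add hx0]
        norm_num
      simp only [add_sub_cancel_right, hd]
      calc C⁻¹ * (x ^ (α - 1) * (x ^ (1 - α) * (α⁻¹ * ((α - β) * x ^ (α - β - 1)))))
          = C⁻¹ * ((x ^ (α - 1) * x ^ (1 - α)) * (C * x ^ (α - β - 1))) := by rw [hC]; ring
        _ = C⁻¹ * (C * x ^ (α - β - 1)) := by rw [hone]; ring
        _ = x ^ (α - β - 1) := by field_simp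
    have := (intervalIntegral.integrableOn_Ioo_rpow_iff (by linarith : (0:ℝ) < t - a)).mp h4
    linarith
end
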